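/- arXiv:2508.07655 — 2 statements merged into one kernel-verified Lean document; each statement's English description precedes it below -/
import Mathlib

section
/- Let $\alpha(s)$ solve an ODE of the form $\frac{d\alpha}{ds} = \alpha\,F(s) - (1-k^2)\alpha^2$ on $[s_0, s_*)$ with $\alpha < 0$, where $0 < k^2 < 1$, $F$ is continuous and bounded, and $\alpha(s) \to -\infty$ as $s \to s_*^-$. Then $\alpha(s) \sim -\frac{1}{(1-k^2)(s_* - s)}$ as $s \to s_*$, i.e. $\lim_{s \to s_*^-} (1-k^2)(s_*-s)\alpha(s) = -1$. -/
open Set Filter Topology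

/-- Blow-up asymptotics: if `α < 0` solves `α' = αF - (1-k²)α²` with `F` continuous and
bounded, and `α → -∞` as `s → s₊⁻`, then `(1-k²)(s₊-s)α(s) → -1`. -/
theorem stmt5 (k s0 sstar : ℝ) (α F : ℝ → ℝ)
    (hk : 0 < k ^ 2) (hk1 : k ^ 2 < 1) (hs : s0 < sstar)
    (hFcont : ContinuousOn F (Set.Ico s0 sstar))
    (hFbdd : ∃ M, ∀ s ∈ Set.Ico s0 sstar, |F s| ≤ M)
    (hneg : ∀ s ∈ Set.Ico s0 sstar, α s < 0)
    (hode : ∀ s ∈ Set.Ico s0 sstar,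
      HasDerivAt α (α s * F s - (1 - k ^ 2) * (α s) ^ 2) s)
    (hblow : Tendsto α (nhdsWithin sstar (Set.Iio sstar)) atBot) :
    Tendsto (fun s => (1 - k ^ 2) * (sstar - s) * α s)
      (nhdsWithin sstar (Set.Iio sstar)) (nhds (-1)) := by
  set K : ℝ := 1 - k ^ 2 with hK
  have hKpos : 0 < K := by simp only [hK]; linarith
  -- derivative of β = α⁻¹
  have hβderiv : ∀ s ∈ Set.Ico s0 sstar,
      HasDerivAt (fun t => (α t)⁻¹) (K - F s * (α s)⁻¹) s := by
    intro s hs'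
    have hα : α s ≠ 0 := (hneg s hs').ne
    have h := (hode s hs').inv hα
    refine h.congr_deriv ?_
    rw [div_eq_iff (pow_ne_zero 2 hα), sub_mul K (F s * (α s)⁻¹), mul_assoc (F s), pow_two,
      ← mul_assoc (α s)⁻¹, inv_mul_cancel₀ hα, one_mul, hK]
    ring
  have hβ0 : Tendsto (fun s => (α s)⁻¹) (𝓝[<] sstar) (𝓝 0) :=
    by
    have h1 : Tendsto (fun s => -α s) (𝓝[<] sstar) atTop := tendsto_neg_atTop_iff.mpr hblow
    have h2 := h1.inv_tendsto_atTop
    have h3 := h2.neg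
    refine h3.congr (fun s => ?_) |>.mono_right (by simp)
    show -((fun s => -α s)⁻¹ s) = (α s)⁻¹
    simp [inv_neg]

  have hmem : ∀ᶠ s in 𝓝[<] sstar, s ∈ Set.Ico s0 sstar := by
    filter_upwards [Ioo_mem_nhdsLT_of_mem (show sstar ∈ Set.Ioc s0 sstar from ⟨hs, le_refl _⟩)]
      with t ht
    exact ⟨ht.1.le, ht.2⟩
  -- β' → K
  have hβ'lim : Tendsto (fun s => K - F s * (α s)⁻¹) (𝓝[<] sstar) (𝓝 K) := by
    obtain ⟨M, hM⟩ := hFbdd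
    have hFβ : Tendsto (fun s => F s * (α s)⁻¹) (𝓝[<] sstar) (𝓝 0) := by
      refine squeeze_zero_norm' ?_ ((hβ0.norm.const_mul M).mono_right (by simp))
      filter_upwards [hmem] with t ht
      rw [norm_mul]
      exact mul_le_mul_of_nonneg_right (hM t ht) (norm_nonneg _)
    have := Filter.Tendsto.sub
      (tendsto_const_nhds : Tendsto (fun _ : ℝ => K) (𝓝[<] sstar) (𝓝 K)) hFβ
    simpa using this
  -- the extended function g
  set g : ℝ → ℝ := fun t => if t = sstar then 0 else (α t)⁻¹ with hg
  have hgeq : ∀ t, t < sstar → g t = (α t)⁻¹ := fun t ht => if_neg (ne_of_lt ht)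
  have hg_deriv : ∀ x ∈ Set.Ico s0 sstar, HasDerivAt g (K - F x * (α x)⁻¹) x := by
    intro x hx
    apply (hβderiv x hx).congr_of_eventuallyEq
    filter_upwards [Iio_mem_nhds hx.2] with t ht
    exact hgeq t ht
  have hgc : ContinuousWithinAt g (Set.Iic sstar) sstar := by
    rw [← continuousWithinAt_diff_self]
    have hset : Set.Iic sstar \ {sstar} = Set.Iio sstar := by
      ext t; simp [lt_iff_le_and_ne]
    rw [hset]
    unfold ContinuousWithinAt
    have hgs : g sstar = 0 := if_pos rfl
    rw [hgs]
    apply hβ0.congr'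
    filter_upwards [self_mem_nhdsWithin] with t ht
    exact (hgeq t ht).symm
  -- key limit: β s / (sstar - s) → -K
  have hD : Tendsto (fun s => (α s)⁻¹ / (sstar - s)) (𝓝[<] sstar) (𝓝 (-K)) := by
    rw [Metric.tendsto_nhds]
    intro ε hε
    have h1 : {t | dist (K - F t * (α t)⁻¹) K < ε} ∈ 𝓝[<] sstar :=
      hβ'lim (Metric.ball_mem_nhds _ hε)
    obtain ⟨l, hl, hsub⟩ := mem_nhdsLT_iff_exists_Ioo_subset.mp h1
    have ha : max l s0 < sstar := max_lt hl hs
    filter_upwards [Ioo_mem_nhdsLT_of_mem (show sstar ∈ Set.Ioc (max l s0) sstar from ⟨ha, le_refl _⟩)]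
      with s hsmem
    have hs0s : s0 < s := lt_of_le_of_lt (le_max_right l s0) hsmem.1
    have hls : l < s := lt_of_le_of_lt (le_max_left l s0) hsmem.1
    have hss : s < sstar := hsmem.2
    -- MVT on [s, sstar]
    have hcont : ContinuousOn g (Set.Icc s sstar) := by
      intro t ht
      rcases eq_or_lt_of_le ht.2 with rfl | htlt
      · exact hgc.mono Set.Icc_subset_Iic_self
      · exact ((hg_deriv t ⟨le_trans hs0s.le ht.1, htlt⟩).continuousAt).continuousWithinAt
    have hdiff : ∀ x ∈ Set.Ioo s sstar, HasDerivAt g (K - F x * (α x)⁻¹) x :=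
      fun x hx => hg_deriv x ⟨le_trans hs0s.le hx.1.le, hx.2⟩
    obtain ⟨c, hc, hceq⟩ := exists_hasDerivAt_eq_slope g (fun x => K - F x * (α x)⁻¹)
      hss hcont hdiff
    have hcmem : c ∈ Set.Ioo l sstar := ⟨lt_trans hls hc.1, hc.2⟩
    have hcd : dist (K - F c * (α c)⁻¹) K < ε := hsub hcmem
    have hgs : g sstar = 0 := if_pos rfl
    have hgss : g s = (α s)⁻¹ := hgeq s hss
    rw [hgs, hgss] at hceq
    have hrw : (α s)⁻¹ / (sstar - s) = -(K - F c * (α c)⁻¹) := by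
      rw [hceq]; ring
    rw [hrw]
    rw [Real.dist_eq] at hcd ⊢
    have : -(K - F c * (α c)⁻¹) - -K = -((K - F c * (α c)⁻¹) - K) := by ring
    rw [this, abs_neg]
    exact hcd
  -- conclude
  have hfin : Tendsto (fun s => K / ((α s)⁻¹ / (sstar - s))) (𝓝[<] sstar) (𝓝 (-1)) := by
    have := (tendsto_const_nhds : Tendsto (fun _ : ℝ => K) (𝓝[<] sstar) (𝓝 K)).div hD (neg_ne_zero.mpr hKpos.ne')
    have heq : K / (-K) = -1 := by
      rw [div_neg, div_self hKpos.ne']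
    rwa [heq] at this
  apply hfin.congr'
  filter_upwards [hmem, self_mem_nhdsWithin] with s hsIco hsIio
  have hα : α s ≠ 0 := (hneg s hsIco).ne
  have hd : sstar - s ≠ 0 := sub_ne_zero.mpr (ne_of_gt hsIio)
  field_simp
end

section
/- Let $\varepsilon, K > 0$, $p \in (0, 1/3)$, and suppose on a rectangle $[0,\underline{u}_1]\times[u_0,u_1]$ (with $u_0 \le -1$, $-1 \le u_1 < 0$) we have functions satisfying: $|rL\phi(\underline{u}, u_1)| \ge$ a bound such that $\int_0^{\underline{u}_1}|rL\phi(\underline{u}, u_1)|^2 d\underline{u} \ge 2^4\, \Omega_0^2(u_1)\, |u_1|$, the radius satisfies $\frac{1}{2}|u_1| \le r \le 2|u_1|$, the lapse satisfies $\frac{1}{2}\Omega_0(u_1) \le \Omega \le 2\Omega_0(u_1)$ along $u = u_1$, and $h$ satisfies the transport equation $Dh = -r\Omega^{-2}(L\phi)^2$ with $h(0, u_1) = h_0(u_1) \le 1$. Then $h(\underline{u}_1, u_1) \le h_0(u_1) - 2 \le -1 < 0$. -/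
open Set MeasureTheory

/-- Trapped surface formation at `S_{u̲₁,u₁}`: if the incoming flux satisfies
`∫₀^{u̲₁}(rLφ)² ≥ 2⁴Ω₀²(u₁)|u₁|`, `r ≈ |u₁|`, `Ω ≈ Ω₀(u₁)` along `u = u₁`, and `h`
satisfies `Dh = -rΩ⁻²(Lφ)²` with `h(0,u₁) = h₀(u₁) ≤ 1`, then
`h(u̲₁,u₁) ≤ h₀(u₁) - 2 ≤ -1 < 0`. -/
theorem stmt15 (ε K p ub1 u0 u1 Ω1 : ℝ) (Lφ r Ω h : ℝ → ℝ)
    (hε : 0 < ε) (hK : 0 < K) (hp : p ∈ Set.Ioo (0:ℝ) (1/3))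
    (hu0 : u0 ≤ -1) (hu1 : -1 ≤ u1) (hu1' : u1 < 0) (hub1 : 0 < ub1)
    (hΩ1 : 0 < Ω1)
    (hLφcont : ContinuousOn Lφ (Set.Icc 0 ub1))
    (hrcont : ContinuousOn r (Set.Icc 0 ub1))
    (hΩcont : ContinuousOn Ω (Set.Icc 0 ub1))
    (hflux : 2 ^ 4 * Ω1 ^ 2 * |u1| ≤ ∫ ub in (0:ℝ)..ub1, (r ub * Lφ ub) ^ 2)
    (hr : ∀ ub ∈ Set.Icc 0 ub1, (1/2) * |u1| ≤ r ub ∧ r ub ≤ 2 * |u1|)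
    (hΩ : ∀ ub ∈ Set.Icc 0 ub1, (1/2) * Ω1 ≤ Ω ub ∧ Ω ub ≤ 2 * Ω1)
    (hode : ∀ ub ∈ Set.Icc 0 ub1,
      HasDerivAt h (-(r ub * (Lφ ub) ^ 2 / (Ω ub) ^ 2)) ub)
    (hh0 : h 0 ≤ 1) :
    h ub1 ≤ h 0 - 2 ∧ h ub1 ≤ -1 ∧ h ub1 < 0 := by
  have habs : 0 < |u1| := abs_pos.mpr (ne_of_lt hu1')
  have hC : (0:ℝ) < 8 * Ω1 ^ 2 * |u1| := by positivity
  have huIcc : Set.uIcc (0:ℝ) ub1 = Set.Icc 0 ub1 := Set.uIcc_of_le hub1.le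
  -- continuity of derivative
  have hΩne : ∀ ub ∈ Set.Icc (0:ℝ) ub1, Ω ub ≠ 0 := fun ub hub => by
    have := (hΩ ub hub).1; nlinarith
  have hFcont : ContinuousOn (fun ub => -(r ub * (Lφ ub) ^ 2 / (Ω ub) ^ 2))
      (Set.Icc 0 ub1) := by
    exact ((hrcont.mul (hLφcont.pow 2)).div (hΩcont.pow 2)
      (fun ub hub => pow_ne_zero 2 (hΩne ub hub))).neg
  have hFint : IntervalIntegrable (fun ub => -(r ub * (Lφ ub) ^ 2 / (Ω ub) ^ 2))
      MeasureTheory.volume 0 ub1 := by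
    apply ContinuousOn.intervalIntegrable; rwa [huIcc]
  have hGint : IntervalIntegrable (fun ub => -((r ub * Lφ ub) ^ 2 / (8 * Ω1 ^ 2 * |u1|)))
      MeasureTheory.volume 0 ub1 := by
    apply ContinuousOn.intervalIntegrable
    rw [huIcc]
    exact (((hrcont.mul hLφcont).pow 2).div_const _).neg
  have hG2int : IntervalIntegrable (fun ub => (r ub * Lφ ub) ^ 2)
      MeasureTheory.volume 0 ub1 := by
    apply ContinuousOn.intervalIntegrable
    rw [huIcc]; exact (hrcont.mul hLφcont).pow 2
  have hftc : ∫ ub in (0:ℝ)..ub1, -(r ub * (Lφ ub) ^ 2 / (Ω ub) ^ 2)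
      = h ub1 - h 0 := by
    apply intervalIntegral.integral_eq_sub_of_hasDerivAt _ hFint
    intro x hx; rw [huIcc] at hx; exact hode x hx
  have hmono : ∫ ub in (0:ℝ)..ub1, -(r ub * (Lφ ub) ^ 2 / (Ω ub) ^ 2)
      ≤ ∫ ub in (0:ℝ)..ub1, -((r ub * Lφ ub) ^ 2 / (8 * Ω1 ^ 2 * |u1|)) := by
    apply intervalIntegral.integral_mono_on hub1.le hFint hGint
    intro x hx
    have hr1 := (hr x hx).1; have hr2 := (hr x hx).2
    have hΩ1' := (hΩ x hx).1; have hΩ2 := (hΩ x hx).2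
    have hrpos : 0 < r x := by nlinarith
    have hΩpos : 0 < Ω x := by nlinarith
    have hsq : (0:ℝ) ≤ (Lφ x) ^ 2 := sq_nonneg _
    rw [neg_le_neg_iff, div_le_div_iff₀ hC (by positivity)]
    have h1 : Ω x ^ 2 ≤ 4 * Ω1 ^ 2 := by nlinarith
    have h2 : r x * Ω x ^ 2 ≤ 8 * Ω1 ^ 2 * |u1| := by nlinarith
    nlinarith [mul_le_mul_of_nonneg_left h2 (mul_nonneg hsq hrpos.le)]
  have hGval : ∫ ub in (0:ℝ)..ub1, -((r ub * Lφ ub) ^ 2 / (8 * Ω1 ^ 2 * |u1|))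
      = -((∫ ub in (0:ℝ)..ub1, (r ub * Lφ ub) ^ 2) / (8 * Ω1 ^ 2 * |u1|)) := by
    rw [intervalIntegral.integral_neg, intervalIntegral.integral_div]
  have hkey : h ub1 ≤ h 0 - 2 := by
    have h2 : -((∫ ub in (0:ℝ)..ub1, (r ub * Lφ ub) ^ 2) / (8 * Ω1 ^ 2 * |u1|)) ≤ -2 := by
      rw [neg_le_neg_iff, le_div_iff₀ hC]; nlinarith
    nlinarith [hmono, hftc, hGval]
  refine ⟨hkey, by linarith, by linarith⟩
end
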